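/- For every integer p ≥ 1 and every R > 0, ∫₀^R (r − R)^{p−1} · (√r/(√2·π)) · J₁(2π√(2r)) dr = (p−1)! · (−√R/(√2·π))^{p+1} · J_{p+1}(2π√(2R)). -/

import Mathlib

open Real MeasureTheory

/-!
Writing `x = 2a√r`, the function `(√r / a)ⁿ Jₙ(2a√r)` is the entire power series
`Gₙ(r) = ∑ₖ (-c)ᵏ r^(k+n) / (k! (k+n)!)` with `c = a²`, and termwise differentiation gives
`G'ₙ₊₁ = Gₙ` with `Gₙ₊₁(0) = 0`. Integrating `(r - R)ᵖ Gₙ` by parts `p` times, the boundary terms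
vanish at both ends, which yields `∫₀ᴿ (r - R)ᵖ Gₙ(r) dr = (-1)ᵖ p! Gₙ₊ₚ₊₁(R)`. The theorem is the
case `n = 1` with `a = √2 π`.
-/

/-- Bessel function of the first kind of nonnegative integer order `ν`. -/
noncomputable def besselJ (ν : ℕ) (x : ℝ) : ℝ :=
  ∑' k : ℕ, (-1 : ℝ) ^ k * (x / 2) ^ (2 * k + ν) /
    ((Nat.factorial k : ℝ) * (Nat.factorial (k + ν) : ℝ))

noncomputable def besselTerm (c : ℝ) (n k : ℕ) (r : ℝ) : ℝ :=
  (-c) ^ k * r ^ (k + n) / ((k.factorial : ℝ) * ((k + n).factorial : ℝ))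

noncomputable def besselSeries (c : ℝ) (n : ℕ) (r : ℝ) : ℝ :=
  ∑' k : ℕ, besselTerm c n k r

lemma norm_besselTerm_le {c r M : ℝ} (n k : ℕ) (hr : |r| ≤ M) :
    ‖besselTerm c n k r‖ ≤ (|c| * M) ^ k / k.factorial * M ^ n := by
  have hM : 0 ≤ M := (abs_nonneg r).trans hr
  have hfac : (1 : ℝ) ≤ (k + n).factorial := mod_cast (k + n).factorial_pos
  rw [besselTerm, norm_div, norm_mul, norm_pow, norm_pow, norm_neg, Real.norm_eq_abs,
    Real.norm_eq_abs, Real.norm_eq_abs,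
    abs_of_pos (by positivity : (0 : ℝ) < k.factorial * (k + n).factorial)]
  calc |c| ^ k * |r| ^ (k + n) / (k.factorial * (k + n).factorial)
      ≤ |c| ^ k * M ^ (k + n) / k.factorial := by
        gcongr
        exact le_mul_of_one_le_right (by positivity) hfac
    _ = (|c| * M) ^ k / k.factorial * M ^ n := by rw [pow_add, mul_pow]; ring

lemma summable_besselTerm_bound (c M : ℝ) (n : ℕ) :
    Summable fun k : ℕ => (|c| * M) ^ k / k.factorial * M ^ n :=
  (Real.summable_pow_div_factorial _).mul_right _

lemma summable_besselTerm (c : ℝ) (n : ℕ) (r : ℝ) : Summable fun k => besselTerm c n k r :=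
  .of_norm_bounded (summable_besselTerm_bound c |r| n) fun k => norm_besselTerm_le n k le_rfl

lemma besselSeries_succ_zero (c : ℝ) (n : ℕ) : besselSeries c (n + 1) 0 = 0 := by
  simp [besselSeries, besselTerm]

lemma hasDerivAt_besselTerm (c : ℝ) (n k : ℕ) (r : ℝ) :
    HasDerivAt (besselTerm c (n + 1) k) (besselTerm c n k r) r := by
  have hfac : ((k + (n + 1)).factorial : ℝ) = (k + n + 1) * (k + n).factorial := by
    rw [← add_assoc, Nat.factorial_succ]; push_cast; ring
  have hmonomial : besselTerm c (n + 1) k =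
      fun x => (-c) ^ k / (k.factorial * (k + (n + 1)).factorial) * x ^ (k + (n + 1)) := by
    funext x; rw [besselTerm]; ring
  rw [hmonomial]
  refine ((hasDerivAt_pow (k + (n + 1)) r).const_mul _).congr_deriv ?_
  rw [besselTerm, hfac, show k + (n + 1) - 1 = k + n by omega]
  push_cast
  field_simp
  ring

lemma hasDerivAt_besselSeries (c : ℝ) (n : ℕ) (r : ℝ) :
    HasDerivAt (besselSeries c (n + 1)) (besselSeries c n r) r := by
  exact hasDerivAt_tsum_of_isPreconnected (summable_besselTerm_bound c (|r| + 1) n)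
    Metric.isOpen_ball (convex_ball _ _).isPreconnected
    (fun k y _ => hasDerivAt_besselTerm c n k y)
    (fun k y hy => norm_besselTerm_le n k (mem_ball_zero_iff.1 hy).le)
    (Metric.mem_ball_self (by positivity)) (summable_besselTerm c (n + 1) 0)
    (by simp)

lemma continuous_besselSeries (c : ℝ) (n : ℕ) : Continuous (besselSeries c n) := by
  refine continuous_iff_continuousAt.2 fun r => ?_
  have hr : Metric.ball (0 : ℝ) (|r| + 1) ∈ nhds r := Metric.isOpen_ball.mem_nhds (by simp)
  exact (continuousOn_tsum (fun k => (by unfold besselTerm; fun_prop : Continuous _).continuousOn)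
    (summable_besselTerm_bound c (|r| + 1) n)
    fun k y hy => norm_besselTerm_le n k (mem_ball_zero_iff.1 hy).le).continuousAt hr

/-- Cauchy's formula for repeated integration, for the antiderivative chain `Gₙ₊₁' = Gₙ`. -/
lemma integral_sub_pow_mul_besselSeries (c R : ℝ) (p n : ℕ) :
    ∫ r in (0 : ℝ)..R, (r - R) ^ p * besselSeries c n r =
      (-1) ^ p * p.factorial * besselSeries c (n + p + 1) R := by
  induction p generalizing n with
  | zero =>
    simp only [pow_zero, one_mul, Nat.factorial_zero, Nat.cast_one, mul_one, add_zero]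
    rw [intervalIntegral.integral_eq_sub_of_hasDerivAt
      (fun r _ => hasDerivAt_besselSeries c n r)
      ((continuous_besselSeries c n).intervalIntegrable 0 R), besselSeries_succ_zero, sub_zero]
  | succ p ih =>
    rw [intervalIntegral.integral_mul_deriv_eq_deriv_mul
      (u' := fun r => (p + 1) * (r - R) ^ p)
      (fun r _ => by simpa [Pi.pow_def] using ((hasDerivAt_id r).sub_const R).pow (p + 1))
      (fun r _ => hasDerivAt_besselSeries c n r)
      (by apply Continuous.intervalIntegrable; fun_prop)
      ((continuous_besselSeries c n).intervalIntegrable 0 R)]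
    simp only [sub_self, zero_pow p.succ_ne_zero, zero_mul, besselSeries_succ_zero, mul_zero,
      zero_sub, mul_assoc, intervalIntegral.integral_const_mul, ih,
      show n + 1 + p + 1 = n + (p + 1) + 1 by omega, Nat.factorial_succ]
    push_cast
    ring

lemma sqrt_div_pow_mul_besselJ {a r : ℝ} (ha : a ≠ 0) (hr : 0 ≤ r) (n : ℕ) :
    (√r / a) ^ n * besselJ n (2 * a * √r) = besselSeries (a ^ 2) n r := by
  rw [besselJ, besselSeries, ← tsum_mul_left]
  congr 1 with k
  have hsq : (a * √r) ^ 2 = a ^ 2 * r := by rw [mul_pow, sq_sqrt hr]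
  have hpow : (√r / a) ^ n * (a * √r) ^ n = r ^ n := by
    rw [← mul_pow]
    congr 1
    field_simp
    exact sq_sqrt hr
  rw [besselTerm, show 2 * a * √r / 2 = a * √r by ring, pow_add, pow_mul, hsq,
    show r ^ (k + n) = r ^ k * ((√r / a) ^ n * (a * √r) ^ n) by rw [hpow, pow_add]]
  ring

theorem stmt18 (p : ℕ) (hp : 1 ≤ p) (R : ℝ) (hR : 0 < R) :
    (∫ r in (0:ℝ)..R,
        (r - R) ^ (p - 1) * (Real.sqrt r / (Real.sqrt 2 * π)) *
          besselJ 1 (2 * π * Real.sqrt (2 * r))) =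
      (Nat.factorial (p - 1) : ℝ) * (-Real.sqrt R / (Real.sqrt 2 * π)) ^ (p + 1) *
        besselJ (p + 1) (2 * π * Real.sqrt (2 * R)) := by
  obtain ⟨q, rfl⟩ : ∃ q, p = q + 1 := ⟨p - 1, by omega⟩
  have ha : √2 * π ≠ 0 := by positivity
  have harg (r : ℝ) : 2 * π * √(2 * r) = 2 * (√2 * π) * √r := by
    rw [sqrt_mul zero_le_two]; ring
  have hintegrand : Set.EqOn
      (fun r => (r - R) ^ q * (√r / (√2 * π)) * besselJ 1 (2 * π * √(2 * r)))
      (fun r => (r - R) ^ q * besselSeries ((√2 * π) ^ 2) 1 r) (Set.uIcc 0 R) := by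
    intro r hr
    rw [Set.uIcc_of_le hR.le] at hr
    simp only [mul_assoc, harg, ← sqrt_div_pow_mul_besselJ ha hr.1, pow_one]
  rw [Nat.add_sub_cancel, intervalIntegral.integral_congr hintegrand,
    integral_sub_pow_mul_besselSeries, show 1 + q + 1 = q + 1 + 1 by ring,
    ← sqrt_div_pow_mul_besselJ ha hR.le, harg, neg_div, neg_pow (√R / _)]
  ring
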